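/- arXiv:1301.6267 — 3 statements merged into one kernel-verified Lean document; each statement's English description precedes it below -/
import Mathlib

section
/- Let ν be a σ-finite measure on ℝ^d and f a ν-measurable function with |f|^p integrable for 1 ≤ p < ∞. Then ∫_{ℝ^d} |f(x)|^p dν(x) = ∫_0^∞ (f^*(t))^p dt, where f^*(t) = inf{s ≥ 0 : D_f(s) ≤ t} is the decreasing rearrangement of f and D_f is its distribution function with respect to ν. -/
open MeasureTheory Set

/-- The decreasing rearrangement of `f` with respect to the measure `ν`:
`f^*(t) = inf {s ≥ 0 : ν {x : |f x| > s} ≤ t}`. -/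
noncomputable def decreasingRearrangement {α : Type*} [MeasurableSpace α]
    (ν : Measure α) (f : α → ℝ) (t : ℝ) : ℝ :=
  sInf {s : ℝ | 0 ≤ s ∧ ν {x | s < |f x|} ≤ ENNReal.ofReal t}

/-!
By the layer cake formula, `∫ g ^ p` only depends on the distribution function `s ↦ μ {g > s}`
on `(0, ∞)`. The rearrangement `f^*` is a generalized inverse of the distribution function
`D_f` of `|f|`: since `D_f` is antitone and right-continuous, `s < f^*(t) ↔ t < D_f(s)`, so
`{t > 0 : f^*(t) > s}` is the interval `(0, D_f(s))`. Hence `f^*` on `(0, ∞)` with Lebesgue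
measure and `|f|` on `(ℝ^d, ν)` have the same distribution function, as soon as `D_f` is finite,
which Chebyshev's inequality guarantees for `|f|^p` integrable.
-/

open scoped ENNReal Topology
open Filter

section LayerCake

variable {α β : Type*} [MeasurableSpace α] [MeasurableSpace β]
  {μ : Measure α} {ν : Measure β} {f : α → ℝ} {g : β → ℝ} {p : ℝ}

lemma lintegral_rpow_eq_of_measure_lt_eq (hf_nn : 0 ≤ᵐ[μ] f) (hg_nn : 0 ≤ᵐ[ν] g)
    (hf : AEMeasurable f μ) (hg : AEMeasurable g ν) (hp : 0 < p)
    (h : ∀ s > 0, μ {x | s < f x} = ν {y | s < g y}) :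
    ∫⁻ x, ENNReal.ofReal (f x ^ p) ∂μ = ∫⁻ y, ENNReal.ofReal (g y ^ p) ∂ν := by
  rw [lintegral_rpow_eq_lintegral_meas_lt_mul μ hf_nn hf hp,
    lintegral_rpow_eq_lintegral_meas_lt_mul ν hg_nn hg hp]
  congr 1
  exact setLIntegral_congr_fun measurableSet_Ioi fun s hs => by rw [h s hs]

lemma integral_rpow_eq_of_measure_lt_eq (hf_nn : 0 ≤ᵐ[μ] f) (hg_nn : 0 ≤ᵐ[ν] g)
    (hf : AEMeasurable f μ) (hg : AEMeasurable g ν) (hp : 0 < p)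
    (h : ∀ s > 0, μ {x | s < f x} = ν {y | s < g y}) :
    ∫ x, f x ^ p ∂μ = ∫ y, g y ^ p ∂ν := by
  rw [integral_eq_lintegral_of_nonneg_ae (hf_nn.mono fun x hx => Real.rpow_nonneg hx p)
      (hf.pow_const p).aestronglyMeasurable,
    integral_eq_lintegral_of_nonneg_ae (hg_nn.mono fun y hy => Real.rpow_nonneg hy p)
      (hg.pow_const p).aestronglyMeasurable,
    lintegral_rpow_eq_of_measure_lt_eq hf_nn hg_nn hf hg hp h]

end LayerCake

section Rearrangement

variable {α : Type*} [MeasurableSpace α] {ν : Measure α} {f : α → ℝ}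

lemma measure_lt_abs_ne_top_of_integrable_rpow {p s : ℝ} (hp : 0 < p)
    (hint : Integrable (fun x => |f x| ^ p) ν) (hs : 0 < s) :
    ν {x | s < |f x|} ≠ ∞ := by
  refine ne_top_of_le_ne_top (hint.measure_norm_ge_lt_top (Real.rpow_pos_of_pos hs p)).ne
    (measure_mono fun x hx => ?_)
  rw [mem_ofPred_eq, Real.norm_of_nonneg (Real.rpow_nonneg (abs_nonneg _) p)]
  exact Real.rpow_le_rpow hs.le (le_of_lt hx) hp.le

lemma exists_measure_lt_abs_le (hf : AEMeasurable f ν) (hfin : ∃ s, ν {x | s < |f x|} ≠ ∞)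
    {ε : ℝ≥0∞} (hε : 0 < ε) : ∃ s ≥ 0, ν {x | s < |f x|} ≤ ε := by
  have hempty : ⋂ s : ℝ, {x | s < |f x|} = ∅ :=
    eq_empty_of_forall_notMem fun x hx => lt_irrefl |f x| (mem_iInter.mp hx _)
  have htend : Tendsto (fun s : ℝ => ν {x | s < |f x|}) atTop (𝓝 0) := by
    have := tendsto_measure_iInter_atTop (μ := ν)
      (fun s => nullMeasurableSet_lt aemeasurable_const hf.abs)
      (fun s t hst x hx => hst.trans_lt hx) hfin
    rwa [hempty, measure_empty] at this
  obtain ⟨s, hs, hs₀⟩ :=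
    ((htend.eventually (ge_mem_nhds hε)).and (eventually_ge_atTop 0)).exists
  exact ⟨s, hs₀, hs⟩

lemma exists_gt_lt_measure_lt_abs {c : ℝ≥0∞} {s : ℝ} (h : c < ν {x | s < |f x|}) :
    ∃ s' > s, c < ν {x | s' < |f x|} := by
  obtain ⟨u, hu_anti, hu_gt, hu_lim⟩ := exists_seq_strictAnti_tendsto s
  have hunion : ⋃ n, {x | u n < |f x|} = {x | s < |f x|} := by
    ext x
    simp only [mem_iUnion, mem_ofPred_eq]
    exact ⟨fun ⟨n, hn⟩ => (hu_gt n).trans hn,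
      fun hx => (hu_lim.eventually (gt_mem_nhds hx)).exists⟩
  have hmono : Monotone fun n => {x | u n < |f x|} :=
    fun m n hmn x hx => (hu_anti.antitone hmn).trans_lt hx
  rw [← hunion, hmono.measure_iUnion] at h
  obtain ⟨n, hn⟩ := lt_iSup_iff.mp h
  exact ⟨u n, hu_gt n, hn⟩

lemma decreasingRearrangement_nonneg (t : ℝ) : 0 ≤ decreasingRearrangement ν f t :=
  Real.sInf_nonneg fun _ hs => hs.1

lemma decreasingRearrangement_le {s t : ℝ} (hs : 0 ≤ s)
    (h : ν {x | s < |f x|} ≤ ENNReal.ofReal t) : decreasingRearrangement ν f t ≤ s :=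
  csInf_le ⟨0, fun _ hy => hy.1⟩ ⟨hs, h⟩

lemma lt_decreasingRearrangement_iff {s t : ℝ} (hs : 0 ≤ s)
    (hne : ∃ s₀ ≥ 0, ν {x | s₀ < |f x|} ≤ ENNReal.ofReal t) :
    s < decreasingRearrangement ν f t ↔ ENNReal.ofReal t < ν {x | s < |f x|} := by
  refine ⟨fun h => ?_, fun h => ?_⟩
  · contrapose! h
    exact decreasingRearrangement_le hs h
  · obtain ⟨s', hss', hs'⟩ := exists_gt_lt_measure_lt_abs h
    refine hss'.trans_le (le_csInf hne fun y hy => ?_)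
    by_contra! hys
    exact (hs'.trans_le (measure_mono fun x hx => hys.trans hx)).not_ge hy.2

lemma antitoneOn_decreasingRearrangement
    (hne : ∀ t > 0, ∃ s ≥ 0, ν {x | s < |f x|} ≤ ENNReal.ofReal t) :
    AntitoneOn (decreasingRearrangement ν f) (Ioi 0) := fun t ht _ _ htt' =>
  csInf_le_csInf ⟨0, fun _ hy => hy.1⟩ (hne t ht)
    fun _ hy => ⟨hy.1, hy.2.trans (ENNReal.ofReal_le_ofReal htt')⟩

lemma volume_lt_decreasingRearrangement {s : ℝ} (hs : 0 ≤ s) (hfin : ν {x | s < |f x|} ≠ ∞)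
    (hne : ∀ t > 0, ∃ s ≥ 0, ν {x | s < |f x|} ≤ ENNReal.ofReal t) :
    volume.restrict (Ioi 0) {t | s < decreasingRearrangement ν f t} = ν {x | s < |f x|} := by
  have hset : {t | s < decreasingRearrangement ν f t} ∩ Ioi 0 =
      Ioo 0 (ν {x | s < |f x|}).toReal := by
    ext t
    rw [mem_inter_iff, mem_Ioo, and_comm, mem_Ioi, mem_ofPred_eq]
    exact and_congr_right fun ht => (lt_decreasingRearrangement_iff hs (hne t ht)).trans
      (ENNReal.ofReal_lt_iff_lt_toReal ht.le hfin)
  rw [Measure.restrict_apply' measurableSet_Ioi, hset, Real.volume_Ioo, sub_zero,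
    ENNReal.ofReal_toReal hfin]

end Rearrangement

theorem integral_rpow_eq_integral_rearrangement_general (d : ℕ)
    (ν : Measure (EuclideanSpace ℝ (Fin d)))
    (p : ℝ) (hp : 1 ≤ p) (f : EuclideanSpace ℝ (Fin d) → ℝ)
    (hf : Measurable f)
    (hint : Integrable (fun x => |f x| ^ p) ν) :
    ∫ x, |f x| ^ p ∂ν =
      ∫ t in Set.Ioi (0:ℝ), (decreasingRearrangement ν f t) ^ p := by
  have hp₀ : 0 < p := zero_lt_one.trans_le hp
  have hfin : ∀ s > 0, ν {x | s < |f x|} ≠ ∞ :=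
    fun s hs => measure_lt_abs_ne_top_of_integrable_rpow hp₀ hint hs
  have hne : ∀ t > 0, ∃ s ≥ 0, ν {x | s < |f x|} ≤ ENNReal.ofReal t := fun t ht =>
    exists_measure_lt_abs_le hf.aemeasurable ⟨1, hfin 1 one_pos⟩ (ENNReal.ofReal_pos.mpr ht)
  exact integral_rpow_eq_of_measure_lt_eq (ae_of_all _ fun x => abs_nonneg (f x))
    (ae_of_all _ decreasingRearrangement_nonneg) hf.abs.aemeasurable
    (aemeasurable_restrict_of_antitoneOn measurableSet_Ioi
      (antitoneOn_decreasingRearrangement hne))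
    hp₀ fun s hs => (volume_lt_decreasingRearrangement hs.le (hfin s hs) hne).symm

/-- `∫ |f|^p dν = ∫_0^∞ (f^*(t))^p dt` where `f^*` is the decreasing rearrangement. -/
theorem integral_rpow_eq_integral_rearrangement (d : ℕ)
    (ν : Measure (EuclideanSpace ℝ (Fin d))) [SigmaFinite ν]
    (p : ℝ) (hp : 1 ≤ p) (f : EuclideanSpace ℝ (Fin d) → ℝ)
    (hf : Measurable f)
    (hint : Integrable (fun x => |f x| ^ p) ν) :
    ∫ x, |f x| ^ p ∂ν =
      ∫ t in Set.Ioi (0:ℝ), (decreasingRearrangement ν f t) ^ p :=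
  integral_rpow_eq_integral_rearrangement_general d ν p hp f hf hint
end

section
/- Let ν be a σ-finite measure on ℝ^d, f a non-negative ν-measurable function, and ϑ a positive ν-measurable function. Then ∫_0^∞ f^*(t) · [(1/ϑ)^*(t)]^{-1} dt ≤ ∫_{ℝ^d} f(x) ϑ(x) dν(x), where g^* denotes the decreasing rearrangement of g with respect to ν. -/
open MeasureTheory Set ENNReal

section RearrangementAux

local notation "μL" => MeasureTheory.volume.restrict (Set.Ioi (0:ℝ))

variable {α : Type*} [MeasurableSpace α] (ν : Measure α)

lemma dr_nonneg (f : α → ℝ) (t : ℝ) : 0 ≤ decreasingRearrangement ν f t :=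
  Real.sInf_nonneg fun _ hs => hs.1

lemma vol_band_le (cc Dv : ℝ≥0∞) :
    μL ({t : ℝ | ENNReal.ofReal t < Dv} ∩ {t | cc ≤ ENNReal.ofReal t}) ≤ Dv - cc := by
  have hmeas : MeasurableSet ({t : ℝ | ENNReal.ofReal t < Dv} ∩ {t | cc ≤ ENNReal.ofReal t}) :=
    (measurableSet_lt ENNReal.measurable_ofReal measurable_const).inter
      (measurableSet_le measurable_const ENNReal.measurable_ofReal)
  rw [Measure.restrict_apply hmeas]
  by_cases hc : cc = ⊤
  · have hemp : ({t : ℝ | ENNReal.ofReal t < Dv} ∩ {t | cc ≤ ENNReal.ofReal t}) = ∅ := by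
      ext t; simp [hc, top_le_iff, ENNReal.ofReal_ne_top]
    rw [hemp]; simp
  by_cases hD : Dv = ⊤
  · have : Dv - cc = ⊤ := ENNReal.sub_eq_top_iff.mpr ⟨hD, hc⟩
    rw [this]; exact le_top
  · calc volume (({t : ℝ | ENNReal.ofReal t < Dv} ∩ {t | cc ≤ ENNReal.ofReal t}) ∩ Ioi 0)
        ≤ volume (Ico cc.toReal Dv.toReal) := by
          apply measure_mono
          rintro t ⟨⟨h1, h2⟩, h3⟩
          exact Set.mem_Ico.mpr ⟨(ENNReal.le_ofReal_iff_toReal_le hc (le_of_lt h3)).mp h2,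
            (ENNReal.ofReal_lt_iff_lt_toReal (le_of_lt h3) hD).mp h1⟩
      _ = ENNReal.ofReal (Dv.toReal - cc.toReal) := Real.volume_Ico
      _ = Dv - cc := by
          rw [ENNReal.ofReal_sub _ ENNReal.toReal_nonneg, ENNReal.ofReal_toReal hD,
              ENNReal.ofReal_toReal hc]

theorem rearrangement_lower_bound_aux [SigmaFinite ν]
    (f ϑ : α → ℝ) (hf : Measurable f) (hϑ : Measurable ϑ)
    (hfnn : ∀ x, 0 ≤ f x) (hϑpos : ∀ x, 0 < ϑ x) :
    ∫⁻ t in Set.Ioi (0:ℝ),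
        ENNReal.ofReal (decreasingRearrangement ν f t *
          (decreasingRearrangement ν (fun x => 1 / ϑ x) t)⁻¹) ≤
      ∫⁻ x, ENNReal.ofReal (f x * ϑ x) ∂ν := by
  classical
  set a : ℝ → ℝ := fun t => decreasingRearrangement ν f t with hadef
  set b : ℝ → ℝ := fun t => decreasingRearrangement ν (fun x => 1 / ϑ x) t with hbdef
  set D : ℝ → ℝ≥0∞ := fun s => ν {x | s < f x} with hDdef
  set c : ℝ → ℝ≥0∞ := fun u => ν {x | ϑ x ≤ u} with hcdef
  have hDanti : Antitone D := fun s₁ s₂ h => measure_mono fun x hx => lt_of_le_of_lt h hx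
  have hcmono : Monotone c := fun u₁ u₂ h => measure_mono fun x hx => le_trans hx h
  have hDm : Measurable D := hDanti.measurable
  have hcm : Measurable c := hcmono.measurable
  have habsf : ∀ s : ℝ, {x | s < |f x|} = {x | s < f x} := fun s => by
    ext x; simp [abs_of_nonneg (hfnn x)]
  set T : Set (ℝ × ℝ) := {p | ENNReal.ofReal p.1 < D p.2} with hTdef
  set U : Set (ℝ × ℝ) := {p | c p.2 ≤ ENNReal.ofReal p.1} with hUdef
  have hT : MeasurableSet T :=
    measurableSet_lt (ENNReal.measurable_ofReal.comp measurable_fst) (hDm.comp measurable_snd)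
  have hU : MeasurableSet U :=
    measurableSet_le (hcm.comp measurable_snd) (ENNReal.measurable_ofReal.comp measurable_fst)
  have hTs : ∀ t : ℝ, MeasurableSet {s : ℝ | (t, s) ∈ T} := fun t =>
    measurable_prodMk_left hT
  have hUs : ∀ t : ℝ, MeasurableSet {u : ℝ | (t, u) ∈ U} := fun t =>
    measurable_prodMk_left hU
  have mTt : ∀ t : ℝ, Measurable fun s => T.indicator (1 : ℝ × ℝ → ℝ≥0∞) (t, s) :=
    fun t => (measurable_one.indicator hT).comp (measurable_prodMk_left)
  have mUt : ∀ t : ℝ, Measurable fun u => U.indicator (1 : ℝ × ℝ → ℝ≥0∞) (t, u) :=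
    fun t => (measurable_one.indicator hU).comp (measurable_prodMk_left)
  -- Step 1: pointwise bound
  have step1 : ∀ t ∈ Ioi (0:ℝ),
      ENNReal.ofReal (a t * (b t)⁻¹) ≤ μL {s | (t, s) ∈ T} * μL {u | (t, u) ∈ U} := by
    intro t ht
    have ha0 : 0 ≤ a t := dr_nonneg ν f t
    have hb0 : 0 ≤ b t := dr_nonneg ν _ t
    rw [ENNReal.ofReal_mul ha0]
    have h1 : ENNReal.ofReal (a t) ≤ μL {s | (t, s) ∈ T} := by
      rw [Measure.restrict_apply (hTs t)]
      calc ENNReal.ofReal (a t) = volume (Ioo 0 (a t)) := by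
            rw [Real.volume_Ioo, sub_zero]
        _ ≤ volume ({s | (t, s) ∈ T} ∩ Ioi 0) := by
            apply measure_mono
            rintro s ⟨hs0, hsa⟩
            refine ⟨?_, hs0⟩
            show ENNReal.ofReal t < D s
            by_contra hle
            push_neg at hle
            have hmem : s ∈ {s' : ℝ | 0 ≤ s' ∧ ν {x | s' < |f x|} ≤ ENNReal.ofReal t} :=
              ⟨le_of_lt hs0, by rwa [habsf s]⟩
            exact absurd (csInf_le ⟨0, fun r hr => hr.1⟩ hmem) (not_le.mpr hsa)
    have h2 : ENNReal.ofReal ((b t)⁻¹) ≤ μL {u | (t, u) ∈ U} := by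
      rw [Measure.restrict_apply (hUs t)]
      calc ENNReal.ofReal ((b t)⁻¹) = volume (Ioo 0 ((b t)⁻¹)) := by
            rw [Real.volume_Ioo, sub_zero]
        _ ≤ volume ({u | (t, u) ∈ U} ∩ Ioi 0) := by
            apply measure_mono
            rintro u ⟨hu0, hub⟩
            refine ⟨?_, hu0⟩
            show c u ≤ ENNReal.ofReal t
            have hbpos : 0 < b t := inv_pos.mp (hu0.trans hub)
            have hblt : b t < u⁻¹ := by
              have h1' : u * b t < 1 := by
                have := mul_lt_mul_of_pos_right hub hbpos
                rwa [inv_mul_cancel₀ (ne_of_gt hbpos)] at this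
              rw [← one_div, lt_div_iff₀ hu0]
              linarith
            have hb' : b t = sInf {s' : ℝ | 0 ≤ s' ∧
                ν {x | s' < |1 / ϑ x|} ≤ ENNReal.ofReal t} := rfl
            have hne : {s' : ℝ | 0 ≤ s' ∧
                ν {x | s' < |1 / ϑ x|} ≤ ENNReal.ofReal t}.Nonempty := by
              by_contra hemp
              rw [Set.not_nonempty_iff_eq_empty] at hemp
              have hb0' : b t = 0 := by rw [hb', hemp, Real.sInf_empty]
              rw [hb0'] at hbpos; exact lt_irrefl _ hbpos
            obtain ⟨s', hs'mem, hs'lt⟩ := exists_lt_of_csInf_lt hne (hb' ▸ hblt)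
            calc c u ≤ ν {x | s' < |1 / ϑ x|} := by
                  apply measure_mono
                  intro x hx
                  have hpos : 0 < 1 / ϑ x := by
                    have := hϑpos x
                    positivity
                  show s' < |1 / ϑ x|
                  rw [abs_of_pos hpos]
                  have : (1:ℝ) / u ≤ 1 / ϑ x := one_div_le_one_div_of_le (hϑpos x) hx
                  have hui : s' < 1 / u := by rw [one_div]; exact hs'lt
                  linarith
              _ ≤ ENNReal.ofReal t := hs'mem.2
    exact mul_le_mul' h1 h2
  -- key innermost bound
  have key : ∀ s u : ℝ,
      (∫⁻ t, T.indicator 1 (t, s) * U.indicator 1 (t, u) ∂μL)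
        ≤ ν ({x | s < f x} ∩ {x | u < ϑ x}) := by
    intro s u
    have hset : MeasurableSet ({t : ℝ | ENNReal.ofReal t < D s} ∩ {t | c u ≤ ENNReal.ofReal t}) :=
      (measurableSet_lt ENNReal.measurable_ofReal measurable_const).inter
        (measurableSet_le measurable_const ENNReal.measurable_ofReal)
    have heq : (fun t => T.indicator (1 : ℝ × ℝ → ℝ≥0∞) (t, s)
          * U.indicator (1 : ℝ × ℝ → ℝ≥0∞) (t, u))
        = ({t : ℝ | ENNReal.ofReal t < D s} ∩ {t | c u ≤ ENNReal.ofReal t}).indicator 1 := by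
      funext t
      by_cases h1 : ENNReal.ofReal t < D s <;> by_cases h2 : c u ≤ ENNReal.ofReal t <;>
        simp [Set.indicator_apply, hTdef, hUdef, h1, h2]
    rw [heq, lintegral_indicator_one hset]
    refine le_trans (vol_band_le (c u) (D s)) (tsub_le_iff_right.mpr ?_)
    calc D s = ν {x | s < f x} := rfl
      _ ≤ ν (({x | s < f x} ∩ {x | u < ϑ x}) ∪ {x | ϑ x ≤ u}) := by
          apply measure_mono
          intro x hx
          by_cases h : u < ϑ x
          · exact Or.inl ⟨hx, h⟩
          · exact Or.inr (not_lt.mp h)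
      _ ≤ _ := measure_union_le _ _
  -- final computation
  have final : (∫⁻ s, ∫⁻ u, ν ({x | s < f x} ∩ {x | u < ϑ x}) ∂μL ∂μL)
      = ∫⁻ x, ENNReal.ofReal (f x * ϑ x) ∂ν := by
    have hA : ∀ s : ℝ, MeasurableSet {x | s < f x} := fun s => measurableSet_lt measurable_const hf
    have inner_u : ∀ s : ℝ, (∫⁻ u, ν ({x | s < f x} ∩ {x | u < ϑ x}) ∂μL)
        = ∫⁻ x, ({x | s < f x}).indicator 1 x * ENNReal.ofReal (ϑ x) ∂ν := by
      intro s
      have h1 : ∀ u : ℝ, ν ({x | s < f x} ∩ {x | u < ϑ x})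
          = ∫⁻ x, ({x | s < f x}).indicator (1 : α → ℝ≥0∞) x
              * ({x | u < ϑ x}).indicator (1 : α → ℝ≥0∞) x ∂ν := by
        intro u
        rw [← lintegral_indicator_one ((hA s).inter (measurableSet_lt measurable_const hϑ))]
        apply lintegral_congr
        intro x
        by_cases hx1 : s < f x <;> by_cases hx2 : u < ϑ x <;>
          simp [Set.indicator_apply, hx1, hx2]
      calc (∫⁻ u, ν ({x | s < f x} ∩ {x | u < ϑ x}) ∂μL)
          = ∫⁻ u, ∫⁻ x, ({x | s < f x}).indicator (1 : α → ℝ≥0∞) x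
              * ({x | u < ϑ x}).indicator (1 : α → ℝ≥0∞) x ∂ν ∂μL :=
            lintegral_congr fun u => h1 u
        _ = ∫⁻ x, ∫⁻ u, ({x | s < f x}).indicator (1 : α → ℝ≥0∞) x
              * ({x | u < ϑ x}).indicator (1 : α → ℝ≥0∞) x ∂μL ∂ν := by
            apply lintegral_lintegral_swap
            apply Measurable.aemeasurable
            have huncur : (Function.uncurry fun (u : ℝ) (x : α) =>
                ({x | s < f x}).indicator (1 : α → ℝ≥0∞) x
                  * ({x | u < ϑ x}).indicator (1 : α → ℝ≥0∞) x)
                = fun p : ℝ × α => ({x | s < f x}).indicator (1 : α → ℝ≥0∞) p.2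
                  * ({q : ℝ × α | q.1 < ϑ q.2}).indicator (1 : ℝ × α → ℝ≥0∞) p := by
              funext p
              simp [Function.uncurry, Set.indicator_apply]
            rw [huncur]
            exact ((measurable_one.indicator (hA s)).comp measurable_snd).mul
              (measurable_one.indicator (measurableSet_lt measurable_fst (hϑ.comp measurable_snd)))
        _ = ∫⁻ x, ({x | s < f x}).indicator 1 x * ENNReal.ofReal (ϑ x) ∂ν := by
            apply lintegral_congr
            intro x
            have heq2 : (fun u : ℝ => ({x' | s < f x'}).indicator (1 : α → ℝ≥0∞) x
                * ({x' | u < ϑ x'}).indicator (1 : α → ℝ≥0∞) x)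
                = fun u : ℝ => ({x' | s < f x'}).indicator (1 : α → ℝ≥0∞) x
                  * (Iio (ϑ x)).indicator (1 : ℝ → ℝ≥0∞) u := by
              funext u
              simp [Set.indicator_apply, Set.mem_Iio]
            rw [heq2, lintegral_const_mul _ (measurable_one.indicator measurableSet_Iio),
              lintegral_indicator_one measurableSet_Iio,
              Measure.restrict_apply measurableSet_Iio, Set.Iio_inter_Ioi, Real.volume_Ioo,
              sub_zero]
    calc (∫⁻ s, ∫⁻ u, ν ({x | s < f x} ∩ {x | u < ϑ x}) ∂μL ∂μL)
        = ∫⁻ s, ∫⁻ x, ({x | s < f x}).indicator 1 x * ENNReal.ofReal (ϑ x) ∂ν ∂μL :=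
          lintegral_congr inner_u
      _ = ∫⁻ x, ∫⁻ s, ({x' | s < f x'}).indicator (1 : α → ℝ≥0∞) x
            * ENNReal.ofReal (ϑ x) ∂μL ∂ν := by
          apply lintegral_lintegral_swap
          apply Measurable.aemeasurable
          have huncur : (Function.uncurry fun (s : ℝ) (x : α) =>
              ({x' | s < f x'}).indicator (1 : α → ℝ≥0∞) x * ENNReal.ofReal (ϑ x))
              = fun p : ℝ × α => ({q : ℝ × α | q.1 < f q.2}).indicator (1 : ℝ × α → ℝ≥0∞) p
                * ENNReal.ofReal (ϑ p.2) := by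
            funext p
            simp [Function.uncurry, Set.indicator_apply]
          rw [huncur]
          exact (measurable_one.indicator (measurableSet_lt measurable_fst
            (hf.comp measurable_snd))).mul
            (ENNReal.measurable_ofReal.comp (hϑ.comp measurable_snd))
      _ = ∫⁻ x, ENNReal.ofReal (f x) * ENNReal.ofReal (ϑ x) ∂ν := by
          apply lintegral_congr
          intro x
          have heq3 : (fun s : ℝ => ({x' | s < f x'}).indicator (1 : α → ℝ≥0∞) x
              * ENNReal.ofReal (ϑ x))
              = fun s : ℝ => (Iio (f x)).indicator (1 : ℝ → ℝ≥0∞) s * ENNReal.ofReal (ϑ x) := by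
            funext s
            simp [Set.indicator_apply, Set.mem_Iio]
          rw [heq3, lintegral_mul_const _ (measurable_one.indicator measurableSet_Iio),
            lintegral_indicator_one measurableSet_Iio,
            Measure.restrict_apply measurableSet_Iio, Set.Iio_inter_Ioi, Real.volume_Ioo,
            sub_zero]
      _ = ∫⁻ x, ENNReal.ofReal (f x * ϑ x) ∂ν :=
          lintegral_congr fun x => (ENNReal.ofReal_mul (hfnn x)).symm
  -- main chain
  calc (∫⁻ t in Set.Ioi (0:ℝ), ENNReal.ofReal (a t * (b t)⁻¹))
      ≤ ∫⁻ t, μL {s | (t, s) ∈ T} * μL {u | (t, u) ∈ U} ∂μL :=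
        lintegral_mono_ae ((ae_restrict_iff' measurableSet_Ioi).mpr
          (Filter.Eventually.of_forall step1))
    _ = ∫⁻ t, (∫⁻ s, T.indicator 1 (t, s) ∂μL) * (∫⁻ u, U.indicator 1 (t, u) ∂μL) ∂μL := by
        apply lintegral_congr
        intro t
        have e1 : (∫⁻ s, T.indicator (1 : ℝ × ℝ → ℝ≥0∞) (t, s) ∂μL) = μL {s | (t, s) ∈ T} := by
          have : (fun s => T.indicator (1 : ℝ × ℝ → ℝ≥0∞) (t, s))
              = ({s : ℝ | (t, s) ∈ T}).indicator 1 := by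
            funext s; simp [Set.indicator_apply]
          rw [this, lintegral_indicator_one (hTs t)]
        have e2 : (∫⁻ u, U.indicator (1 : ℝ × ℝ → ℝ≥0∞) (t, u) ∂μL) = μL {u | (t, u) ∈ U} := by
          have : (fun u => U.indicator (1 : ℝ × ℝ → ℝ≥0∞) (t, u))
              = ({u : ℝ | (t, u) ∈ U}).indicator 1 := by
            funext u; simp [Set.indicator_apply]
          rw [this, lintegral_indicator_one (hUs t)]
        rw [e1, e2]
    _ = ∫⁻ t, ∫⁻ s, ∫⁻ u, T.indicator 1 (t, s) * U.indicator 1 (t, u) ∂μL ∂μL ∂μL := by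
        apply lintegral_congr
        intro t
        rw [← lintegral_mul_const _ (mTt t)]
        apply lintegral_congr
        intro s
        rw [← lintegral_const_mul _ (mUt t)]
    _ = ∫⁻ s, ∫⁻ t, ∫⁻ u, T.indicator 1 (t, s) * U.indicator 1 (t, u) ∂μL ∂μL ∂μL := by
        apply lintegral_lintegral_swap
        apply Measurable.aemeasurable
        have huncur : (Function.uncurry fun (t : ℝ) (s : ℝ) =>
            ∫⁻ u, T.indicator (1 : ℝ × ℝ → ℝ≥0∞) (t, s)
              * U.indicator (1 : ℝ × ℝ → ℝ≥0∞) (t, u) ∂μL)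
            = fun p : ℝ × ℝ => ∫⁻ u, T.indicator (1 : ℝ × ℝ → ℝ≥0∞) p
              * U.indicator (1 : ℝ × ℝ → ℝ≥0∞) (p.1, u) ∂μL := by
          funext p
          simp [Function.uncurry]
        rw [huncur]
        have hm : Measurable fun q : (ℝ × ℝ) × ℝ =>
            T.indicator (1 : ℝ × ℝ → ℝ≥0∞) q.1 * U.indicator (1 : ℝ × ℝ → ℝ≥0∞) (q.1.1, q.2) :=
          ((measurable_one.indicator hT).comp measurable_fst).mul
            ((measurable_one.indicator hU).comp ((measurable_fst.fst).prodMk measurable_snd))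
        exact hm.lintegral_prod_right'
    _ = ∫⁻ s, ∫⁻ u, ∫⁻ t, T.indicator 1 (t, s) * U.indicator 1 (t, u) ∂μL ∂μL ∂μL := by
        apply lintegral_congr
        intro s
        apply lintegral_lintegral_swap
        apply Measurable.aemeasurable
        have huncur : (Function.uncurry fun (t : ℝ) (u : ℝ) =>
            T.indicator (1 : ℝ × ℝ → ℝ≥0∞) (t, s) * U.indicator (1 : ℝ × ℝ → ℝ≥0∞) (t, u))
            = fun p : ℝ × ℝ => T.indicator (1 : ℝ × ℝ → ℝ≥0∞) (p.1, s)
              * U.indicator (1 : ℝ × ℝ → ℝ≥0∞) p := by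
          funext p
          simp [Function.uncurry]
        rw [huncur]
        exact ((measurable_one.indicator hT).comp (measurable_fst.prodMk measurable_const)).mul
          (measurable_one.indicator hU)
    _ ≤ ∫⁻ s, ∫⁻ u, ν ({x | s < f x} ∩ {x | u < ϑ x}) ∂μL ∂μL :=
        lintegral_mono fun s => lintegral_mono fun u => key s u
    _ = ∫⁻ x, ENNReal.ofReal (f x * ϑ x) ∂ν := final

end RearrangementAux

/-- Reverse Hardy–Littlewood type inequality:
`∫_0^∞ f^*(t) [(1/ϑ)^*(t)]⁻¹ dt ≤ ∫ f ϑ dν`. -/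
theorem rearrangement_lower_bound (d : ℕ)
    (ν : Measure (EuclideanSpace ℝ (Fin d))) [SigmaFinite ν]
    (f ϑ : EuclideanSpace ℝ (Fin d) → ℝ)
    (hf : Measurable f) (hϑ : Measurable ϑ)
    (hfnn : ∀ x, 0 ≤ f x) (hϑpos : ∀ x, 0 < ϑ x) :
    ∫⁻ t in Set.Ioi (0:ℝ),
        ENNReal.ofReal (decreasingRearrangement ν f t *
          (decreasingRearrangement ν (fun x => 1 / ϑ x) t)⁻¹) ≤
      ∫⁻ x, ENNReal.ofReal (f x * ϑ x) ∂ν :=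
  rearrangement_lower_bound_aux ν f ϑ hf hϑ hfnn hϑpos
end

section
/- Let 1 < p' < ∞ and let w be a non-negative locally integrable function on (0,∞) with ∫_0^t w(l) dl > 0 for t > 0. Define G(s) = (∫_0^s ((1/t)∫_0^t w(l) dl)^{-p'} w(t) dt)^{1/p'}. Then for all s > 0, G(s)^{p'} ≤ (p'/(p'-1)) ∫_0^s ((1/t)∫_0^t w(l) dl)^{1-p'} dt. -/
/-!
Write `W t = ∫₀ᵗ w`, so that `G(s)^{p'} = ∫₀ˢ t^{p'} W(t)^{-p'} w(t) dt`. Expanding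
`t^{p'} = ∫₀ᵗ p' u^{p'-1} du` and exchanging the integrals (Tonelli) leaves the inner integral
`∫ᵤˢ W^{-p'} w = (W(u)^{1-p'} - W(s)^{1-p'})/(p'-1)`, the fundamental theorem of calculus for
the absolutely continuous function `W^{1-p'}`. This is the integration by parts of the paper, done
without boundary terms at `0`, and yields the identity in `[0, ∞]`
`G(s)^{p'} + s^{p'} W(s)^{1-p'}/(p'-1) = (p'/(p'-1)) ∫₀ˢ (W(t)/t)^{1-p'} dt`.
Since the boundary term is finite, the left integral is infinite whenever the right one is, so
the inequality also holds for the Bochner integrals, which are `0` in that case.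
-/

open MeasureTheory Set
open scoped NNReal ENNReal

theorem LipschitzOnWith.comp_absolutelyContinuousOnInterval {X Y : Type*} [PseudoMetricSpace X]
    [PseudoMetricSpace Y] {φ : X → Y} {f : ℝ → X} {K : ℝ≥0} {a b : ℝ}
    (hφ : LipschitzOnWith K φ (f '' uIcc a b)) (hf : AbsolutelyContinuousOnInterval f a b) :
    AbsolutelyContinuousOnInterval (φ ∘ f) a b := by
  rw [absolutelyContinuousOnInterval_iff] at hf ⊢
  intro ε hε
  obtain ⟨δ, hδ, hfδ⟩ := hf (ε / (K + 1)) (by positivity)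
  refine ⟨δ, hδ, fun E hE hEδ => ?_⟩
  calc ∑ i ∈ Finset.range E.1, dist ((φ ∘ f) (E.2 i).1) ((φ ∘ f) (E.2 i).2)
      ≤ ∑ i ∈ Finset.range E.1, K * dist (f (E.2 i).1) (f (E.2 i).2) := by
        gcongr with i hi
        exact hφ.dist_le_mul _ (mem_image_of_mem f (hE.1 i hi).1) _
          (mem_image_of_mem f (hE.1 i hi).2)
    _ = K * ∑ i ∈ Finset.range E.1, dist (f (E.2 i).1) (f (E.2 i).2) := by
        rw [Finset.mul_sum]
    _ ≤ K * (ε / (K + 1)) := by gcongr; exact (hfδ E hE hEδ).le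
    _ < (K + 1) * (ε / (K + 1)) := by gcongr; linarith
    _ = ε := by field_simp

theorem AbsolutelyContinuousOnInterval.rpow_const {F : ℝ → ℝ} {a b : ℝ}
    (hF : AbsolutelyContinuousOnInterval F a b) (hpos : ∀ x ∈ uIcc a b, 0 < F x) (q : ℝ) :
    AbsolutelyContinuousOnInterval (fun x => F x ^ q) a b := by
  have hcpt : IsCompact (F '' uIcc a b) := isCompact_uIcc.image_of_continuousOn hF.continuousOn
  obtain ⟨_, ⟨x₀, hx₀, rfl⟩, hmin⟩ := hcpt.exists_isLeast (nonempty_uIcc.image F)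
  obtain ⟨M, hM⟩ := hcpt.isBounded.bddAbove
  have hsub : F '' uIcc a b ⊆ Icc (F x₀) M := fun y hy => ⟨hmin hy, hM hy⟩
  have hdiff : ContDiffOn ℝ 1 (fun y : ℝ => y ^ q) (Icc (F x₀) M) := fun y hy =>
    (Real.contDiffAt_rpow_const_of_ne ((hpos x₀ hx₀).trans_le hy.1).ne').contDiffWithinAt
  obtain ⟨K, hK⟩ := hdiff.exists_lipschitzOnWith one_ne_zero (convex_Icc _ _) isCompact_Icc
  exact (hK.mono hsub).comp_absolutelyContinuousOnInterval hF

theorem AbsolutelyContinuousOnInterval.integral_rpow_mul_deriv {F : ℝ → ℝ} {a b : ℝ}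
    (hF : AbsolutelyContinuousOnInterval F a b) (hpos : ∀ x ∈ uIcc a b, 0 < F x) (r : ℝ) :
    ∫ x in a..b, (r + 1) * F x ^ r * deriv F x = F b ^ (r + 1) - F a ^ (r + 1) := by
  rw [← (hF.rpow_const hpos (r + 1)).integral_deriv_eq_sub]
  refine intervalIntegral.integral_congr_ae ?_
  filter_upwards [hF.ae_differentiableAt] with x hx hxab
  have hx' : x ∈ uIcc a b := uIoc_subset_uIcc hxab
  have := ((hx hx').hasDerivAt.rpow_const (p := r + 1) (Or.inl (hpos x hx').ne')).deriv
  rw [this, add_sub_cancel_right]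
  ring

theorem IntervalIntegrable.integral_rpow_primitive_mul {w : ℝ → ℝ} {a b u v : ℝ}
    (hw : IntervalIntegrable w volume a b) (huv : uIcc u v ⊆ uIcc a b)
    (hpos : ∀ x ∈ uIcc u v, 0 < ∫ t in a..x, w t) (r : ℝ) :
    ∫ x in u..v, (r + 1) * (∫ t in a..x, w t) ^ r * w x =
      (∫ t in a..v, w t) ^ (r + 1) - (∫ t in a..u, w t) ^ (r + 1) := by
  have hac := (hw.absolutelyContinuousOnInterval_intervalIntegral left_mem_uIcc).mono huv
  rw [← hac.integral_rpow_mul_deriv hpos r]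
  refine intervalIntegral.integral_congr_ae ?_
  filter_upwards [hw.ae_hasDerivAt_integral] with x hx hxuv
  rw [(hx (huv (uIoc_subset_uIcc hxuv)) a left_mem_uIcc).deriv]

theorem lintegral_Ioc_rpow_neg_primitive_mul {w : ℝ → ℝ} {p u s : ℝ} (hp : p ≠ 1)
    (hw : IntegrableOn w (Ioc 0 s)) (hnn : ∀ t ∈ Ioc u s, 0 ≤ w t) (hu : 0 ≤ u)
    (hus : u ≤ s) (hpos : ∀ t ∈ Icc u s, 0 < ∫ l in Ioc 0 t, w l) :
    ∫⁻ t in Ioc u s, ENNReal.ofReal ((∫ l in Ioc 0 t, w l) ^ (-p) * w t) =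
      ENNReal.ofReal (((∫ l in Ioc 0 u, w l) ^ (1 - p) - (∫ l in Ioc 0 s, w l) ^ (1 - p)) /
        (p - 1)) := by
  set W : ℝ → ℝ := fun t => ∫ l in Ioc 0 t, w l
  have hprim : ∀ t ∈ Icc u s, ∫ l in (0)..t, w l = W t := fun t ht =>
    intervalIntegral.integral_of_le (hu.trans ht.1)
  have hsub : uIcc u s ⊆ uIcc 0 s := by
    rw [uIcc_of_le hus, uIcc_of_le (hu.trans hus)]
    exact Icc_subset_Icc_left hu
  have hftc : (1 - p) * ∫ t in Ioc u s, W t ^ (-p) * w t = W s ^ (1 - p) - W u ^ (1 - p) := by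
    have := ((intervalIntegrable_iff_integrableOn_Ioc_of_le (hu.trans hus)).2 hw
      ).integral_rpow_primitive_mul hsub (fun x hx => by
        rw [uIcc_of_le hus] at hx; rw [hprim x hx]; exact hpos x hx) (-p)
    rwa [intervalIntegral.integral_of_le hus, hprim s ⟨hus, le_rfl⟩, hprim u ⟨le_rfl, hus⟩,
      setIntegral_congr_fun measurableSet_Ioc (fun x hx => by
        rw [hprim x (Ioc_subset_Icc_self hx), mul_assoc]), integral_const_mul,
      neg_add_eq_sub] at this
  have hcont : ContinuousOn (fun t => W t ^ (-p)) (Icc u s) :=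
    ((intervalIntegral.continuousOn_primitive
      ((integrableOn_Icc_iff_integrableOn_Ioc enorm_ne_top).2 hw)).mono
        (Icc_subset_Icc_left hu)).rpow_const fun t ht => Or.inl (hpos t ht).ne'
  have hint : IntegrableOn (fun t => W t ^ (-p) * w t) (Ioc u s) :=
    (hw.mono_set (Ioc_subset_Ioc_left hu)).continuousOn_mul_of_subset hcont isCompact_Icc
      measurableSet_Ioc Ioc_subset_Icc_self
  rw [← ofReal_integral_eq_lintegral_ofReal hint (ae_restrict_of_forall_mem measurableSet_Ioc
    fun t ht => mul_nonneg (Real.rpow_nonneg (hpos t (Ioc_subset_Icc_self ht)).le _) (hnn t ht))]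
  congr 1
  rw [eq_div_iff (sub_ne_zero.2 hp)]
  linear_combination (-1 : ℝ) * hftc

theorem lintegral_Ioc_ofReal_mul_rpow_sub_one {p t : ℝ} (hp : 0 < p) (ht : 0 ≤ t) :
    ∫⁻ u in Ioc 0 t, ENNReal.ofReal (p * u ^ (p - 1)) = ENNReal.ofReal (t ^ p) := by
  have hint : IntegrableOn (fun u => p * u ^ (p - 1)) (Ioc 0 t) :=
    (intervalIntegrable_iff_integrableOn_Ioc_of_le ht).1
      ((intervalIntegral.intervalIntegrable_rpow' (by linarith)).const_mul p)
  rw [← ofReal_integral_eq_lintegral_ofReal hint (ae_restrict_of_forall_mem measurableSet_Ioc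
    fun u hu => mul_nonneg hp.le (Real.rpow_nonneg hu.1.le _)),
    ← intervalIntegral.integral_of_le ht, intervalIntegral.integral_const_mul,
    integral_rpow (Or.inl (by linarith)), sub_add_cancel, Real.zero_rpow hp.ne']
  congr 1
  field_simp
  ring

theorem lintegral_Ioc_lintegral_mul_eq {a s : ℝ} {g h : ℝ → ℝ≥0∞}
    (hg : AEMeasurable g (volume.restrict (Ioc a s)))
    (hh : AEMeasurable h (volume.restrict (Ioc a s))) :
    ∫⁻ t in Ioc a s, (∫⁻ u in Ioc a t, g u) * h t =
      ∫⁻ u in Ioc a s, g u * ∫⁻ t in Ioc u s, h t := by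
  have hA : MeasurableSet {q : ℝ × ℝ | q.2 ∈ Ioc a q.1} :=
    (measurableSet_lt measurable_const measurable_snd).inter
      (measurableSet_le measurable_snd measurable_fst)
  have hmeas : AEMeasurable (Function.uncurry fun t u => (Ioc a t).indicator g u * h t)
      ((volume.restrict (Ioc a s)).prod (volume.restrict (Ioc a s))) := by
    have huncurry : (Function.uncurry fun t u => (Ioc a t).indicator g u * h t) =
        {q : ℝ × ℝ | q.2 ∈ Ioc a q.1}.indicator (fun q => g q.2 * h q.1) := by
      ext ⟨t, u⟩
      simp only [Function.uncurry, Set.indicator_apply, mem_ofPred_eq]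
      split_ifs <;> simp
    rw [huncurry]
    exact (hg.comp_snd.mul hh.comp_fst).indicator hA
  calc ∫⁻ t in Ioc a s, (∫⁻ u in Ioc a t, g u) * h t
      = ∫⁻ t in Ioc a s, ∫⁻ u in Ioc a s, (Ioc a t).indicator g u * h t := by
        refine setLIntegral_congr_fun measurableSet_Ioc fun t ht => ?_
        rw [lintegral_mul_const'' _ (hg.indicator measurableSet_Ioc),
          lintegral_indicator measurableSet_Ioc, Measure.restrict_restrict measurableSet_Ioc,
          inter_eq_self_of_subset_left (Ioc_subset_Ioc_right ht.2)]
    _ = ∫⁻ u in Ioc a s, ∫⁻ t in Ioc a s, (Ioc a t).indicator g u * h t :=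
        lintegral_lintegral_swap hmeas
    _ = ∫⁻ u in Ioc a s, g u * ∫⁻ t in Ioc u s, h t := by
        refine setLIntegral_congr_fun measurableSet_Ioc fun u hu => ?_
        have hslice : ∀ t,
            (Ioc a t).indicator g u * h t = (Ici u).indicator (fun t => g u * h t) t := by
          intro t
          by_cases hut : u ≤ t <;> simp [Set.indicator, hut, hu.1]
        simp_rw [hslice]
        have hIcc : Ici u ∩ Ioc a s = Icc u s := by
          ext t
          simp only [mem_inter_iff, mem_Ici, mem_Ioc, mem_Icc]
          constructor
          · rintro ⟨hut, -, hts⟩; exact ⟨hut, hts⟩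
          · rintro ⟨hut, hts⟩; exact ⟨hut, hu.1.trans_le hut, hts⟩
        rw [lintegral_indicator measurableSet_Ici, Measure.restrict_restrict measurableSet_Ici,
          hIcc, ← Measure.restrict_congr_set Ioc_ae_eq_Icc, lintegral_const_mul'' _
            (hh.mono_measure (Measure.restrict_mono (Ioc_subset_Ioc_left hu.1.le) le_rfl))]

theorem lintegral_Ioc_ofReal_rpow_mul_eq {p s : ℝ} (hp : 0 < p) {h : ℝ → ℝ≥0∞}
    (hh : AEMeasurable h (volume.restrict (Ioc 0 s))) :
    ∫⁻ t in Ioc 0 s, ENNReal.ofReal (t ^ p) * h t =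
      ∫⁻ u in Ioc 0 s, ENNReal.ofReal (p * u ^ (p - 1)) * ∫⁻ t in Ioc u s, h t := by
  rw [← lintegral_Ioc_lintegral_mul_eq (by fun_prop) hh]
  refine setLIntegral_congr_fun measurableSet_Ioc fun t ht => ?_
  rw [lintegral_Ioc_ofReal_mul_rpow_sub_one hp ht.1.le]

theorem one_div_mul_rpow {u x : ℝ} (hu : 0 < u) (hx : 0 ≤ x) (q : ℝ) :
    ((1 / u) * x) ^ q = u ^ (-q) * x ^ q := by
  rw [Real.mul_rpow (one_div_nonneg.2 hu.le) hx, one_div, Real.inv_rpow hu.le,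
    Real.rpow_neg hu.le]

theorem aemeasurable_primitive {w : ℝ → ℝ} {a s : ℝ} (hw : IntegrableOn w (Ioc a s)) :
    AEMeasurable (fun t => ∫ l in Ioc a t, w l) (volume.restrict (Ioc a s)) :=
  ((intervalIntegral.continuousOn_primitive ((integrableOn_Icc_iff_integrableOn_Ioc
    enorm_ne_top).2 hw)).mono Ioc_subset_Icc_self).aemeasurable measurableSet_Ioc

theorem lintegral_rpow_neg_average_mul_eq {w : ℝ → ℝ} {p s : ℝ} (hp : 0 < p) (hp1 : p ≠ 1)
    (hw : IntegrableOn w (Ioc 0 s)) (hnn : ∀ t ∈ Ioc 0 s, 0 ≤ w t)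
    (hpos : ∀ t ∈ Ioc 0 s, 0 < ∫ l in Ioc 0 t, w l) :
    ∫⁻ t in Ioc 0 s, ENNReal.ofReal (((1 / t) * ∫ l in Ioc 0 t, w l) ^ (-p) * w t) =
      ∫⁻ u in Ioc 0 s, ENNReal.ofReal (p * u ^ (p - 1)) *
        ENNReal.ofReal (((∫ l in Ioc 0 u, w l) ^ (1 - p) - (∫ l in Ioc 0 s, w l) ^ (1 - p)) /
          (p - 1)) := by
  set W : ℝ → ℝ := fun t => ∫ l in Ioc 0 t, w l
  have hh : AEMeasurable (fun t => ENNReal.ofReal (W t ^ (-p) * w t))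
      (volume.restrict (Ioc 0 s)) := by
    have := aemeasurable_primitive hw
    have := hw.aemeasurable
    fun_prop
  calc ∫⁻ t in Ioc 0 s, ENNReal.ofReal (((1 / t) * W t) ^ (-p) * w t)
      = ∫⁻ t in Ioc 0 s, ENNReal.ofReal (t ^ p) * ENNReal.ofReal (W t ^ (-p) * w t) :=
        setLIntegral_congr_fun measurableSet_Ioc fun t ht => by
          rw [← ENNReal.ofReal_mul (Real.rpow_nonneg ht.1.le _), ← mul_assoc,
            one_div_mul_rpow ht.1 (hpos t ht).le, neg_neg]
    _ = ∫⁻ u in Ioc 0 s, ENNReal.ofReal (p * u ^ (p - 1)) *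
          ∫⁻ t in Ioc u s, ENNReal.ofReal (W t ^ (-p) * w t) :=
        lintegral_Ioc_ofReal_rpow_mul_eq hp hh
    _ = _ :=
        setLIntegral_congr_fun measurableSet_Ioc fun u hu => by
          rw [lintegral_Ioc_rpow_neg_primitive_mul hp1 hw
            (fun t ht => hnn t ⟨hu.1.trans ht.1, ht.2⟩) hu.1.le hu.2
            (fun t ht => hpos t ⟨hu.1.trans_le ht.1, ht.2⟩)]

theorem lintegral_rpow_neg_average_mul_add_eq {w : ℝ → ℝ} {p s : ℝ} (hp : 1 < p)
    (hs : 0 ≤ s) (hw : IntegrableOn w (Ioc 0 s)) (hnn : ∀ t ∈ Ioc 0 s, 0 ≤ w t)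
    (hpos : ∀ t ∈ Ioc 0 s, 0 < ∫ l in Ioc 0 t, w l) :
    (∫⁻ t in Ioc 0 s, ENNReal.ofReal (((1 / t) * ∫ l in Ioc 0 t, w l) ^ (-p) * w t)) +
        ENNReal.ofReal (s ^ p * (∫ l in Ioc 0 s, w l) ^ (1 - p) / (p - 1)) =
      ENNReal.ofReal (p / (p - 1)) *
        ∫⁻ t in Ioc 0 s, ENNReal.ofReal (((1 / t) * ∫ l in Ioc 0 t, w l) ^ (1 - p)) := by
  set W : ℝ → ℝ := fun t => ∫ l in Ioc 0 t, w l
  set c : ℝ → ℝ≥0∞ := fun u => ENNReal.ofReal (p * u ^ (p - 1))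
  set φ : ℝ → ℝ := fun u => W u ^ (1 - p) / (p - 1)
  have hp0 : 0 < p - 1 := sub_pos.2 hp
  have hc : Measurable c := (measurable_const.mul (measurable_id.pow_const _)).ennreal_ofReal
  have hφ : ∀ u ∈ Ioc 0 s, 0 ≤ φ s ∧ φ s ≤ φ u := fun u hu =>
    ⟨div_nonneg (Real.rpow_nonneg (hpos s ⟨hu.1.trans_le hu.2, le_rfl⟩).le _) hp0.le,
      div_le_div_of_nonneg_right (Real.rpow_le_rpow_of_nonpos (hpos u hu)
        (setIntegral_mono_set hw (ae_restrict_of_forall_mem measurableSet_Ioc hnn)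
          (Ioc_subset_Ioc_right hu.2).eventuallyLE) (by linarith)) hp0.le⟩
  have hD : ENNReal.ofReal (s ^ p * W s ^ (1 - p) / (p - 1)) =
      ∫⁻ u in Ioc 0 s, c u * ENNReal.ofReal (φ s) := by
    rw [lintegral_mul_const _ hc, lintegral_Ioc_ofReal_mul_rpow_sub_one (by linarith) hs,
      ← ENNReal.ofReal_mul (Real.rpow_nonneg hs _), mul_div_assoc]
  have hY : ENNReal.ofReal (p / (p - 1)) *
        ∫⁻ t in Ioc 0 s, ENNReal.ofReal (((1 / t) * W t) ^ (1 - p)) =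
      ∫⁻ u in Ioc 0 s, c u * ENNReal.ofReal (φ u) := by
    rw [← lintegral_const_mul' _ _ ENNReal.ofReal_ne_top]
    refine setLIntegral_congr_fun measurableSet_Ioc fun u hu => ?_
    rw [← ENNReal.ofReal_mul (by positivity), ← ENNReal.ofReal_mul
      (mul_nonneg (by linarith) (Real.rpow_nonneg hu.1.le _)),
      one_div_mul_rpow hu.1 (hpos u hu).le, neg_sub]
    congr 1
    simp only [φ, W]
    field_simp
  rw [lintegral_rpow_neg_average_mul_eq (by linarith) hp.ne' hw hnn hpos, hD, hY,
    ← lintegral_add_right _ (hc.mul_const _)]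
  refine setLIntegral_congr_fun measurableSet_Ioc fun u hu => ?_
  rw [sub_div, ← mul_add, ← ENNReal.ofReal_add (sub_nonneg.2 (hφ u hu).2) (hφ u hu).1,
    sub_add_cancel]

theorem ENNReal.toReal_le_toReal_of_add_eq {x d z : ℝ≥0∞} (h : x + d = z) (hd : d ≠ ⊤) :
    x.toReal ≤ z.toReal := by
  rcases eq_or_ne x ⊤ with rfl | hx
  · simp
  · exact ENNReal.toReal_mono (h ▸ ENNReal.add_ne_top.2 ⟨hx, hd⟩) (h ▸ le_self_add)

theorem G_pow_le_general (p' : ℝ) (hp' : 1 < p') (w : ℝ → ℝ)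
    (hnn : ∀ t ∈ Set.Ioi (0:ℝ), 0 ≤ w t)
    (hpos : ∀ t : ℝ, 0 < t → 0 < ∫ l in Set.Ioc (0:ℝ) t, w l)
    (G : ℝ → ℝ)
    (hG : ∀ s : ℝ, G s =
      (∫ t in Set.Ioc (0:ℝ) s,
        ((1 / t) * ∫ l in Set.Ioc (0:ℝ) t, w l) ^ (-p') * w t) ^ (1 / p')) :
    ∀ s : ℝ, 0 < s →
      (G s) ^ p' ≤ (p' / (p' - 1)) *
        ∫ t in Set.Ioc (0:ℝ) s, ((1 / t) * ∫ l in Set.Ioc (0:ℝ) t, w l) ^ (1 - p') := by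
  intro s hs
  have hw : IntegrableOn w (Ioc 0 s) := by
    by_contra h
    exact (hpos s hs).ne' (integral_undef h)
  have hWm := aemeasurable_primitive hw
  have hwm := hw.aemeasurable
  have hbase : ∀ t ∈ Ioc 0 s, 0 ≤ (1 / t) * ∫ l in Ioc 0 t, w l := fun t ht =>
    mul_nonneg (one_div_nonneg.2 ht.1.le) (hpos t ht.1).le
  have hX : ∀ t ∈ Ioc 0 s, 0 ≤ ((1 / t) * ∫ l in Ioc 0 t, w l) ^ (-p') * w t := fun t ht =>
    mul_nonneg (Real.rpow_nonneg (hbase t ht) _) (hnn t ht.1)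
  have hY : ∀ t ∈ Ioc 0 s, 0 ≤ ((1 / t) * ∫ l in Ioc 0 t, w l) ^ (1 - p') := fun t ht =>
    Real.rpow_nonneg (hbase t ht) _
  rw [hG s, ← Real.rpow_mul (setIntegral_nonneg measurableSet_Ioc hX),
    one_div_mul_cancel (by linarith), Real.rpow_one,
    integral_eq_lintegral_of_nonneg_ae (ae_restrict_of_forall_mem measurableSet_Ioc hX)
      (by fun_prop : AEMeasurable _ _).aestronglyMeasurable,
    integral_eq_lintegral_of_nonneg_ae (ae_restrict_of_forall_mem measurableSet_Ioc hY)
      (by fun_prop : AEMeasurable _ _).aestronglyMeasurable,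
    ← ENNReal.toReal_ofReal (div_nonneg (by linarith) (by linarith) : 0 ≤ p' / (p' - 1)),
    ← ENNReal.toReal_mul]
  exact ENNReal.toReal_le_toReal_of_add_eq (lintegral_rpow_neg_average_mul_add_eq hp' hs.le hw
    (fun t ht => hnn t ht.1) (fun t ht => hpos t ht.1)) ENNReal.ofReal_ne_top

/-- Integration-by-parts bound:
`G(s)^{p'} ≤ (p'/(p'-1)) ∫_0^s ((1/t)∫_0^t w)^{1-p'} dt` where
`G(s) = (∫_0^s ((1/t)∫_0^t w)^{-p'} w(t) dt)^{1/p'}`. -/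
theorem G_pow_le (p' : ℝ) (hp' : 1 < p') (w : ℝ → ℝ)
    (hnn : ∀ t ∈ Set.Ioi (0:ℝ), 0 ≤ w t)
    (hloc : MeasureTheory.LocallyIntegrableOn w (Set.Ioi 0))
    (hpos : ∀ t : ℝ, 0 < t → 0 < ∫ l in Set.Ioc (0:ℝ) t, w l)
    (G : ℝ → ℝ)
    (hG : ∀ s : ℝ, G s =
      (∫ t in Set.Ioc (0:ℝ) s,
        ((1 / t) * ∫ l in Set.Ioc (0:ℝ) t, w l) ^ (-p') * w t) ^ (1 / p')) :
    ∀ s : ℝ, 0 < s →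
      (G s) ^ p' ≤ (p' / (p' - 1)) *
        ∫ t in Set.Ioc (0:ℝ) s, ((1 / t) * ∫ l in Set.Ioc (0:ℝ) t, w l) ^ (1 - p') :=
  G_pow_le_general p' hp' w hnn hpos G hG
end
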